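/- arXiv:1706.04992 — 2 statements merged into one kernel-verified Lean document; each statement's English description precedes it below -/
import Mathlib

section
/- Let n ≥ 1 and let a, b be integers with a ≥ b - n. Define for 1 ≤ l ≤ n the values a_l = ⌈a/n⌉ if l ≤ (a mod n) and a_l = ⌊a/n⌋ otherwise (where a mod n is the representative in [0, n-1]), and similarly b_l from b. Then for every l, a_l ≥ b_l - 1. -/
lemma ceil_fdiv_eq (n a : ℤ) (hn : 1 ≤ n) :
    (a + n - 1).fdiv n = a.fdiv n + (if a % n = 0 then 0 else 1) := by
  have hn0 : (0:ℤ) ≤ n := by omega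
  rw [Int.fdiv_eq_ediv_of_nonneg _ hn0, Int.fdiv_eq_ediv_of_nonneg _ hn0]
  have h1 := Int.mul_ediv_add_emod a n
  have h2 := Int.emod_nonneg a (by omega : n ≠ 0)
  have h3 := Int.emod_lt_of_pos a (by omega : 0 < n)
  by_cases h : a % n = 0
  · simp only [h, if_true]
    have : a + n - 1 = (n - 1) + n * (a / n) := by omega
    rw [this, Int.add_mul_ediv_left _ _ (by omega : n ≠ 0),
      Int.ediv_eq_zero_of_lt (by omega) (by omega)]
    omega
  · simp only [h, if_false]
    have : a + n - 1 = (a % n - 1) + n * (a / n + 1) := by ring_nf; omega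
    rw [this, Int.add_mul_ediv_left _ _ (by omega : n ≠ 0),
      Int.ediv_eq_zero_of_lt (by omega) (by omega)]
    omega

/-- If `a ≥ b - n`, the balanced partitions of `a` and `b` into `n` parts
(ceilings for the first `a mod n` parts, floors for the rest) satisfy
`a_l ≥ b_l - 1` for every `l`. -/
theorem stmt_0 (n a b : ℤ) (hn : 1 ≤ n) (hab : b - n ≤ a) :
    ∀ l : ℤ, 1 ≤ l → l ≤ n →
      (if l ≤ Int.emod b n then Int.fdiv (b + n - 1) n else Int.fdiv b n) - 1 ≤
      (if l ≤ Int.emod a n then Int.fdiv (a + n - 1) n else Int.fdiv a n) := by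
  intro l hl1 hln
  have hn0 : (0:ℤ) ≤ n := by omega
  rw [ceil_fdiv_eq n a hn, ceil_fdiv_eq n b hn,
    Int.fdiv_eq_ediv_of_nonneg _ hn0, Int.fdiv_eq_ediv_of_nonneg _ hn0]
  have ha1 := Int.mul_ediv_add_emod a n
  have ha2 := Int.emod_nonneg a (by omega : n ≠ 0)
  have ha3 := Int.emod_lt_of_pos a (by omega : 0 < n)
  have hb1 := Int.mul_ediv_add_emod b n
  have hb2 := Int.emod_nonneg b (by omega : n ≠ 0)
  have hb3 := Int.emod_lt_of_pos b (by omega : 0 < n)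
  have e1 : Int.emod a n = a % n := rfl
  have e2 : Int.emod b n = b % n := rfl
  have hq : b / n - 1 ≤ a / n := by nlinarith
  split_ifs with h1 h2 h2 h3 h4 h5 h5 <;> try omega
  · -- b ceiling, a floor: a % n < l ≤ b % n, b % n ≠ 0 ⇒ b/n ≤ a/n
    have hr : a % n < b % n := by omega
    have hkey : b / n ≤ a / n := by nlinarith
    omega
end

section
/- Let p be a prime, e ≥ 1, k ≥ 1, and d_1, ..., d_k nonnegative integers with d_1 ≥ 1 and d_1 + ... + d_k < k. Suppose p > max(k, d_1, ..., d_k). Let N_1, ..., N_k be integers and fix 0 < e' < e. Suppose that for all 1 < i ≤ k, the residue of N_i modulo p^{e'} is strictly greater than the residue of N_{i-1} modulo p^{e'}. Suppose further N_1 = N_1'' p^{e'} + N_1', ..., N_k = N_k'' p^{e'} + N_k' where the N_i' satisfy: 0 ≤ N_1' ≤ d_1(p^{e'} - 1), and 0 ≤ N_i' ≤ N_{i-1}' + d_i(p^{e'} - 1) for 1 < i ≤ k. Then ⌊N_k' / p^{e'}⌋ ≤ (d_1 + ... + d_k) - k < 0, a contradiction; hence no such decomposition with the N_i' satisfying these inequalities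 exists. -/
/-- Non-splitting criterion (Proposition 4.4): if the residues of `N i` modulo
`p^e'` are strictly increasing along the chain, then the `N i` admit no
decomposition `N i = N'' i * p^e' + N' i` with the `N' i` satisfying the chain
of inequalities `(*)_{e'}`. -/
theorem stmt_2 (p : ℕ) (hp : p.Prime) (e e' k : ℕ) (he : 1 ≤ e) (hk : 1 ≤ k)
    (d N N' N'' : ℕ → ℤ)
    (hd0 : ∀ i, 1 ≤ i → i ≤ k → 0 ≤ d i) (hd1 : 1 ≤ d 1)
    (hsum : ∑ i ∈ Finset.Icc 1 k, d i < (k : ℤ))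
    (hpk : (k : ℤ) < (p : ℤ)) (hpd : ∀ i, 1 ≤ i → i ≤ k → d i < (p : ℤ))
    (he'0 : 0 < e') (he'e : e' < e)
    (hres : ∀ i, 1 < i → i ≤ k →
      Int.emod (N (i - 1)) ((p : ℤ) ^ e') < Int.emod (N i) ((p : ℤ) ^ e'))
    (hdecomp : ∀ i, 1 ≤ i → i ≤ k → N i = N'' i * (p : ℤ) ^ e' + N' i)
    (h1 : 0 ≤ N' 1 ∧ N' 1 ≤ d 1 * ((p : ℤ) ^ e' - 1))
    (hi : ∀ i, 1 < i → i ≤ k →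
      0 ≤ N' i ∧ N' i ≤ N' (i - 1) + d i * ((p : ℤ) ^ e' - 1)) :
    False := by
  set q : ℤ := (p : ℤ) ^ e' with hqdef
  have hq : 0 < q := pow_pos (by exact_mod_cast hp.pos) e'
  have hmod : ∀ a b : ℤ, Int.emod (a * q + b) q = Int.emod b q := fun a b => by
    show (a * q + b) % q = b % q
    rw [add_comm, Int.add_mul_emod_self_right]
  have hr : ∀ i, 1 < i → i ≤ k → N' (i - 1) % q < N' i % q := by
    intro i h1i hik
    have h2 := hres i h1i hik
    rw [hdecomp i (by omega) hik, hdecomp (i - 1) (by omega) (by omega)] at h2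
    rw [hmod, hmod] at h2
    exact h2
  have key : ∀ i, 1 ≤ i → i ≤ k → N' i / q ≤ (∑ j ∈ Finset.Icc 1 i, d j) - i := by
    intro i
    induction i with
    | zero => omega
    | succ n ih =>
      intro _ hik
      rcases Nat.eq_zero_or_pos n with hn | hn
      · subst hn
        have h2 := h1.2
        have hlt : N' 1 < d 1 * q := by nlinarith
        have := (Int.ediv_lt_iff_lt_mul hq).mpr hlt
        simpa using by omega
      · have ihn := ih hn (by omega)
        have hrn := hr (n + 1) (by omega) hik
        have hbd := (hi (n + 1) (by omega) hik).2
        simp only [Nat.add_sub_cancel] at hrn hbd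
        have e1 : N' n = q * (N' n / q) + N' n % q := (Int.mul_ediv_add_emod _ _).symm
        have e2 : N' (n + 1) = q * (N' (n + 1) / q) + N' (n + 1) % q :=
          (Int.mul_ediv_add_emod _ _).symm
        have hdn : 0 ≤ d (n + 1) := hd0 (n + 1) (by omega) hik
        have hmul : N' (n + 1) / q * q < (N' n / q + d (n + 1)) * q := by nlinarith
        have hflt : N' (n + 1) / q < N' n / q + d (n + 1) :=
          lt_of_mul_lt_mul_right hmul hq.le
        rw [Finset.sum_Icc_succ_top (by omega : 1 ≤ n + 1)]
        push_cast
        omega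
  have hk' := key k hk le_rfl
  have hNk : 0 ≤ N' k := by
    rcases eq_or_lt_of_le hk with h | h
    · rw [← h]; exact h1.1
    · exact (hi k h le_rfl).1
  have : 0 ≤ N' k / q := Int.ediv_nonneg hNk hq.le
  omega
end
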